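/- Let p ≥ 3 be a prime, u ∈ {1,…,p−1}, and let n ≥ p be an integer of the form n = n''·p^{s+1} + k·p^s + j for some n'' ∈ ℕ, k ∈ {1,…,p−1}, s ∈ ℕ₊ and j ∈ {0,…,p−1}. Then ν_p( ∑_{i=0}^{u} (−1)^i · C(u,i) · D_p(n−i) ) = ν_p( (p−k)·C(p+u−1, j) + k·C(p+u−1, p+j) ). -/

import Mathlib

open PowerSeries Finset

/-- The number of digits equal to `i` in the base-`p` representation of `n`. -/
def Np (p i n : ℕ) : ℕ := (Nat.digits p n).count i

/-- `Dcoef p r n` is the coefficient of `x^n` in `∏_{i=0}^∞ (1 - x^{p^i})^r`.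
Since `p ≥ 2`, the factors with index `i > n` do not affect the coefficient of `x^n`,
so the product may be truncated at `i = n`. -/
noncomputable def Dcoef (p r n : ℕ) : ℤ :=
  PowerSeries.coeff (R := ℤ) n (∏ i ∈ Finset.range (n + 1), (1 - PowerSeries.X ^ p ^ i) ^ r)

/-- `Dp p n = D_{p,p-1}(n)`. -/
noncomputable def Dp (p n : ℕ) : ℤ := Dcoef p (p - 1) n

/-- `Acoef m k n` is the coefficient of `x^n` in `∏_{i=0}^∞ (1 - x^{m^i})^{-k}`,
the number of `k`-colored `m`-ary partitions of `n`.  Here `(1 - X^{m^i})⁻¹` is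
realized as `PowerSeries.invOfUnit (1 - X ^ m ^ i) 1`, and since `m ≥ 2` the factors
with index `i > n` do not affect the coefficient of `x^n`. -/
noncomputable def Acoef (m k n : ℕ) : ℤ :=
  PowerSeries.coeff (R := ℤ) n
    (∏ i ∈ Finset.range (n + 1),
      (PowerSeries.invOfUnit (1 - PowerSeries.X ^ m ^ i) 1) ^ k)

/-
Write `F(x) = ∏ᵢ (1 - x^{pⁱ})^{p-1}`, so that `F(x) = (1 - x)^{p-1} F(x^p)`. Comparing
coefficients, `D_p(mp + j) = (-1)^j C(p-1, j) D_p(m)` for `j < p`; in particular every `D_p(m)` is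
prime to `p`. Likewise `(1 - x)^u F(x) = (1 - x)^{p+u-1} F(x^p)` and `p + u - 1 < 2p`, so for
`n = n'p + j` the alternating sum is
`(-1)^j C(p+u-1, j) D_p(n') + (-1)^{p+j} C(p+u-1, p+j) D_p(n'-1)`.
Here `n' = (n''p + k) p^{s-1}`: the trailing zero digits of `n'` and the trailing digits `p - 1`
of `n' - 1` contribute factors `1` (as `p` is odd), so `D_p(n') = (-1)^k C(p-1, k) D_p(n'')` and
`D_p(n'-1) = (-1)^{k-1} C(p-1, k-1) D_p(n'')`. Finally `k C(p-1, k) = (p-k) C(p-1, k-1)`, and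
`k`, `C(p-1, k-1)` and `D_p(n'')` are prime to `p`.
-/

theorem Nat.Prime.not_dvd_choose_of_lt {p n k : ℕ} (hp : p.Prime) (hk : k ≤ n) (hn : n < p) :
    ¬ p ∣ n.choose k := by
  intro h
  simpa [hp, h, (Nat.choose_pos hk).ne'] using
    (Nat.factorization_eq_zero_iff _ _).mp (Nat.factorization_choose_eq_zero_of_lt (k := k) hn)

theorem emultiplicity_mul_of_not_dvd {α : Type*} [CommMonoidWithZero α] [IsCancelMulZero α]
    {p a b : α} (hp : Prime p) (ha : ¬ p ∣ a) :
    emultiplicity p (a * b) = emultiplicity p b := by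
  rw [emultiplicity_mul hp, emultiplicity_eq_zero.2 ha, zero_add]

theorem Nat.cast_choose_succ_right_eq (n k : ℕ) :
    (n.choose (k + 1) : ℤ) * (k + 1) = n.choose k * (n - k) := by
  rcases le_or_gt k n with hk | hk
  · have h := Nat.choose_succ_right_eq n k
    zify [hk] at h
    exact h
  · simp [Nat.choose_eq_zero_of_lt hk, Nat.choose_eq_zero_of_lt (Nat.lt_succ_of_lt hk)]

namespace PowerSeries

variable {R : Type*} [CommRing R]

theorem coeff_mul_expand {p j : ℕ} (hp : p ≠ 0) (hj : j < p) (g f : R⟦X⟧) (q : ℕ) :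
    coeff (q * p + j) (g * expand p hp f) =
      ∑ i ∈ range (q + 1), coeff (i * p + j) g * coeff (q - i) f := by
  rw [coeff_mul]
  symm
  refine Finset.sum_of_injOn (fun i => (i * p + j, (q - i) * p)) ?_ ?_ ?_ ?_
  · intro a _ b _ h
    simp only [Prod.mk.injEq] at h
    exact Nat.eq_of_mul_eq_mul_right (Nat.pos_of_ne_zero hp) (by omega)
  · intro i hi
    obtain ⟨d, rfl⟩ := Nat.exists_eq_add_of_le (Nat.lt_succ_iff.mp (by simpa using hi))
    simp only [mem_coe, HasAntidiagonal.mem_antidiagonal, Nat.add_sub_cancel_left]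
    ring
  · rintro ⟨a, b⟩ hab hnot
    rw [coeff_expand]
    split_ifs with hdvd
    · obtain ⟨c, rfl⟩ := hdvd
      rw [HasAntidiagonal.mem_antidiagonal] at hab
      dsimp only at hab
      have hcq : c ≤ q := Nat.lt_succ_iff.mp <| Nat.lt_of_mul_lt_mul_left (a := p) (by
        rw [Nat.mul_succ, mul_comm p q]; omega)
      obtain ⟨d, rfl⟩ := Nat.exists_eq_add_of_le hcq
      refine absurd ⟨d, by simp, ?_⟩ hnot
      dsimp only
      rw [Nat.add_sub_cancel, Prod.mk.injEq, mul_comm p c]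
      exact ⟨by linarith, rfl⟩
    · rw [mul_zero]
  · intro i _
    simp [mul_comm _ p, coeff_expand_mul]

theorem coeff_one_sub_X_pow (r m : ℕ) :
    coeff m ((1 - X : R⟦X⟧) ^ r) = (-1) ^ m * r.choose m := by
  induction r generalizing m with
  | zero => cases m <;> simp [coeff_one]
  | succ r ih =>
    cases m with
    | zero => simp
    | succ m =>
      rw [pow_succ, mul_sub, mul_one, map_sub, coeff_succ_mul_X, ih, ih, Nat.choose_succ_succ']
      push_cast
      ring

theorem coeff_one_sub_X_pow_mul_expand_of_lt {p r j : ℕ} (hp : p ≠ 0) (hr : r < p) (hj : j < p)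
    (f : R⟦X⟧) (q : ℕ) :
    coeff (q * p + j) ((1 - X) ^ r * expand p hp f) = (-1) ^ j * r.choose j * coeff q f := by
  rw [coeff_mul_expand hp hj, sum_range_succ', sum_eq_zero, zero_add]
  · simp [coeff_one_sub_X_pow]
  · intro i _
    rw [coeff_one_sub_X_pow, Nat.choose_eq_zero_of_lt (by nlinarith)]
    simp

theorem coeff_one_sub_X_pow_mul_expand_of_lt_two_mul {p r j : ℕ} (hp : p ≠ 0) (hr : r < 2 * p)
    (hj : j < p) (f : R⟦X⟧) (q : ℕ) :
    coeff ((q + 1) * p + j) ((1 - X) ^ r * expand p hp f) =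
      (-1) ^ j * r.choose j * coeff (q + 1) f +
        (-1) ^ (p + j) * r.choose (p + j) * coeff q f := by
  rw [coeff_mul_expand hp hj, sum_range_succ', sum_range_succ', sum_eq_zero, zero_add]
  · simp only [zero_add, one_mul, coeff_one_sub_X_pow, add_tsub_cancel_right, zero_mul, tsub_zero]
    ring
  · intro i _
    rw [coeff_one_sub_X_pow, Nat.choose_eq_zero_of_lt (by nlinarith)]
    simp

theorem coeff_one_sub_X_pow_mul {u n : ℕ} (hu : u ≤ n) (f : R⟦X⟧) :
    coeff n ((1 - X) ^ u * f) =
      ∑ i ∈ range (u + 1), (-1) ^ i * u.choose i * coeff (n - i) f := by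
  rw [coeff_mul, Finset.Nat.sum_antidiagonal_eq_sum_range_succ_mk]
  simp only [coeff_one_sub_X_pow]
  refine (Finset.sum_subset (range_subset_range.mpr (by omega)) fun i _ hi => ?_).symm
  rw [Nat.choose_eq_zero_of_lt (by simpa using hi)]
  simp

end PowerSeries

noncomputable def truncProd (p r N : ℕ) : ℤ⟦X⟧ := ∏ i ∈ range N, (1 - X ^ p ^ i) ^ r

theorem truncProd_succ {p : ℕ} (hp : p ≠ 0) (r N : ℕ) :
    truncProd p r (N + 1) = (1 - X) ^ r * expand p hp (truncProd p r N) := by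
  rw [truncProd, prod_range_succ', pow_zero, pow_one, mul_comm, truncProd, map_prod]
  congr 1
  refine prod_congr rfl fun i _ => ?_
  rw [map_pow, map_sub, map_one, map_pow, expand_X, ← pow_mul, ← pow_succ']

theorem coeff_truncProd_succ_of_lt {p r N n : ℕ} (h : n < p ^ N) :
    coeff n (truncProd p r (N + 1)) = coeff n (truncProd p r N) := by
  obtain ⟨g, hg⟩ : X ^ p ^ N ∣ (1 - X ^ p ^ N : ℤ⟦X⟧) ^ r - 1 := by
    have h := sub_dvd_pow_sub_pow (1 - X ^ p ^ N : ℤ⟦X⟧) 1 r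
    rwa [sub_sub_cancel_left, neg_dvd, one_pow] at h
  rw [truncProd, prod_range_succ, ← truncProd,
    ← sub_add_cancel ((1 - X ^ p ^ N : ℤ⟦X⟧) ^ r) 1, hg, mul_add, mul_one, map_add,
    mul_left_comm, coeff_X_pow_mul', if_neg (by omega), zero_add]

theorem Dcoef_eq_coeff_truncProd {p r n N : ℕ} (hp : 1 < p) (h : n < N) :
    Dcoef p r n = coeff n (truncProd p r N) := by
  induction N, h using Nat.le_induction with
  | base => rfl
  | succ N hN ih => rw [ih, coeff_truncProd_succ_of_lt ((Nat.lt_pow_self hp).trans' hN)]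

theorem Dcoef_zero (p r : ℕ) : Dcoef p r 0 = 1 := by
  simp [Dcoef]

theorem Dcoef_mul_add {p r j : ℕ} (hp : 1 < p) (hr : r < p) (hj : j < p) (a : ℕ) :
    Dcoef p r (a * p + j) = (-1) ^ j * r.choose j * Dcoef p r a := by
  have ha : a < a * p + j + 1 := by nlinarith
  rw [Dcoef_eq_coeff_truncProd hp (N := a * p + j + 1 + 1) (by omega), truncProd_succ (by omega),
    coeff_one_sub_X_pow_mul_expand_of_lt _ hr hj, ← Dcoef_eq_coeff_truncProd hp ha]

theorem Dcoef_mul_pow {p r : ℕ} (hp : 1 < p) (hr : r < p) (a t : ℕ) :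
    Dcoef p r (a * p ^ t) = Dcoef p r a := by
  induction t with
  | zero => simp
  | succ t ih =>
    rw [pow_succ, ← mul_assoc, ← add_zero (a * p ^ t * p), Dcoef_mul_add hp hr (by omega), ih]
    simp

theorem Dp_mul_add {p j : ℕ} (hp : 1 < p) (hj : j < p) (a : ℕ) :
    Dp p (a * p + j) = (-1) ^ j * (p - 1).choose j * Dp p a :=
  Dcoef_mul_add hp (by omega) hj a

theorem Dp_mul_pow_sub_one {p : ℕ} (hp : 1 < p) (hodd : Odd p) (a t : ℕ) :
    Dp p ((a + 1) * p ^ t - 1) = Dp p a := by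
  induction t with
  | zero => simp
  | succ t ih =>
    have hpos : 0 < (a + 1) * p ^ t := by positivity
    have hsplit : (a + 1) * p ^ (t + 1) - 1 = ((a + 1) * p ^ t - 1) * p + (p - 1) := by
      rw [pow_succ, ← mul_assoc, Nat.sub_mul, one_mul]
      have : p ≤ (a + 1) * p ^ t * p := Nat.le_mul_of_pos_left p hpos
      omega
    rw [hsplit, Dp_mul_add hp (by omega), ih, Nat.choose_self,
      (Nat.Odd.sub_odd hodd odd_one).neg_one_pow]
    simp

theorem Nat.Prime.not_dvd_Dp {p : ℕ} (hp : p.Prime) (m : ℕ) : ¬ (p : ℤ) ∣ Dp p m := by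
  have hpZ : _root_.Prime (p : ℤ) := Nat.prime_iff_prime_int.mp hp
  induction m using Nat.strong_induction_on with
  | _ m ih =>
    rcases Nat.eq_zero_or_pos m with rfl | hm
    · simpa [Dp, Dcoef_zero] using hpZ.not_dvd_one
    have hmod : m % p < p := Nat.mod_lt m hp.pos
    rw [← Nat.div_add_mod' m p, Dp_mul_add hp.one_lt hmod, mul_assoc,
      (isUnit_one.neg.pow _).dvd_mul_left]
    exact hpZ.not_dvd_mul (by exact_mod_cast hp.not_dvd_choose_of_lt (by omega) (by omega))
      (ih _ (Nat.div_lt_self hm hp.one_lt))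

theorem sum_alternating_choose_mul_Dp {p u j : ℕ} (hp : 1 < p) (hu : u ≤ p) (hj : j < p)
    (q : ℕ) :
    ∑ i ∈ range (u + 1), (-1 : ℤ) ^ i * u.choose i * Dp p ((q + 1) * p + j - i) =
      (-1) ^ j * (p + u - 1).choose j * Dp p (q + 1) +
        (-1) ^ (p + j) * (p + u - 1).choose (p + j) * Dp p q := by
  have hun : u ≤ (q + 1) * p + j := by nlinarith
  have hqn : q + 1 < (q + 1) * p + j := by nlinarith
  simp only [Dp, fun i => Dcoef_eq_coeff_truncProd (r := p - 1) hp
    (Nat.lt_succ_of_le (Nat.sub_le ((q + 1) * p + j) i))]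
  rw [← coeff_one_sub_X_pow_mul hun, truncProd_succ (by omega), ← mul_assoc, ← pow_add,
    show u + (p - 1) = p + u - 1 by omega,
    coeff_one_sub_X_pow_mul_expand_of_lt_two_mul _ (by omega) hj,
    ← Dcoef_eq_coeff_truncProd hp hqn, ← Dcoef_eq_coeff_truncProd hp (by omega)]

theorem sum_alternating_choose_mul_Dp_of_digits {p u j k : ℕ} (hp : 1 < p) (hodd : Odd p)
    (hu : u ≤ p) (hj : j < p) (hk : k + 1 < p) (a t : ℕ) :
    ∑ i ∈ range (u + 1),
        (-1 : ℤ) ^ i * u.choose i * Dp p ((a * p + k + 1) * p ^ t * p + j - i) =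
      (-1) ^ (j + k + 1) * Dp p a * ((p - 1).choose (k + 1) * (p + u - 1).choose j +
        (p - 1).choose k * (p + u - 1).choose (p + j)) := by
  obtain ⟨q, hq⟩ : ∃ q, (a * p + k + 1) * p ^ t = q + 1 :=
    ⟨_, (Nat.succ_pred_eq_of_pos (by positivity)).symm⟩
  have hDq : Dp p q = (-1) ^ k * (p - 1).choose k * Dp p a := by
    rw [← Nat.add_sub_cancel q 1, ← hq, Dp_mul_pow_sub_one hp hodd, Dp_mul_add hp (by omega)]
  have hDq1 : Dp p (q + 1) = (-1) ^ (k + 1) * (p - 1).choose (k + 1) * Dp p a := by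
    rw [← hq, Dp, Dcoef_mul_pow hp (by omega), add_assoc, ← Dp, Dp_mul_add hp hk]
  rw [hq, sum_alternating_choose_mul_Dp hp hu hj, hDq, hDq1, pow_add (-1 : ℤ) p,
    hodd.neg_one_pow]
  ring

theorem stmt3_general (p u : ℕ) (hp : p.Prime) (hp3 : 3 ≤ p) (hu2 : u ≤ p - 1)
    (n n'' k s j : ℕ) (hk1 : 1 ≤ k) (hk2 : k ≤ p - 1) (hs : 1 ≤ s) (hj : j ≤ p - 1)
    (hform : n = n'' * p ^ (s + 1) + k * p ^ s + j) :
    emultiplicity (p : ℤ)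
        (∑ i ∈ Finset.range (u + 1), (-1 : ℤ) ^ i * (u.choose i : ℤ) * Dp p (n - i)) =
      emultiplicity (p : ℤ)
        (((p : ℤ) - (k : ℤ)) * ((p + u - 1).choose j : ℤ) +
          (k : ℤ) * ((p + u - 1).choose (p + j) : ℤ)) := by
  have hpZ : Prime (p : ℤ) := Nat.prime_iff_prime_int.mp hp
  have hodd : Odd p := hp.odd_of_ne_two (by omega)
  obtain ⟨t, rfl⟩ : ∃ t, s = t + 1 := ⟨s - 1, by omega⟩
  obtain ⟨k, rfl⟩ : ∃ k', k = k' + 1 := ⟨k - 1, by omega⟩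
  have hn : n = (n'' * p + k + 1) * p ^ t * p + j := by rw [hform]; ring
  have key : ((k + 1 : ℕ) : ℤ) *
      ∑ i ∈ Finset.range (u + 1), (-1 : ℤ) ^ i * (u.choose i : ℤ) * Dp p (n - i) =
      ((-1) ^ (j + k + 1) * (Dp p n'' * (p - 1).choose k)) *
        (((p : ℤ) - ((k + 1 : ℕ) : ℤ)) * ((p + u - 1).choose j : ℤ) +
          ((k + 1 : ℕ) : ℤ) * ((p + u - 1).choose (p + j) : ℤ)) := by
    have hpascal := Nat.cast_choose_succ_right_eq (p - 1) k
    rw [Nat.cast_sub hp.one_le, Nat.cast_one] at hpascal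
    rw [hn, sum_alternating_choose_mul_Dp_of_digits hp.one_lt hodd (by omega) (by omega)
      (by omega)]
    push_cast
    linear_combination (-1) ^ (j + k + 1) * Dp p n'' * ((p + u - 1).choose j : ℤ) * hpascal
  have hunit : ¬ (p : ℤ) ∣ (-1) ^ (j + k + 1) * (Dp p n'' * (p - 1).choose k) := by
    rw [(isUnit_one.neg.pow _).dvd_mul_left]
    exact hpZ.not_dvd_mul (hp.not_dvd_Dp n'')
      (by exact_mod_cast hp.not_dvd_choose_of_lt (by omega) (by omega))
  have hk : ¬ (p : ℤ) ∣ ((k + 1 : ℕ) : ℤ) :=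
    Int.natCast_dvd_natCast.not.mpr (Nat.not_dvd_of_pos_of_lt (by omega) (by omega))
  rw [← emultiplicity_mul_of_not_dvd hpZ hk, key, emultiplicity_mul_of_not_dvd hpZ hunit]

theorem stmt3 (p u : ℕ) (hp : p.Prime) (hp3 : 3 ≤ p) (hu1 : 1 ≤ u) (hu2 : u ≤ p - 1)
    (n n'' k s j : ℕ) (hk1 : 1 ≤ k) (hk2 : k ≤ p - 1) (hs : 1 ≤ s) (hj : j ≤ p - 1)
    (hn : p ≤ n) (hform : n = n'' * p ^ (s + 1) + k * p ^ s + j) :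
    emultiplicity (p : ℤ)
        (∑ i ∈ Finset.range (u + 1), (-1 : ℤ) ^ i * (u.choose i : ℤ) * Dp p (n - i)) =
      emultiplicity (p : ℤ)
        (((p : ℤ) - (k : ℤ)) * ((p + u - 1).choose j : ℤ) +
          (k : ℤ) * ((p + u - 1).choose (p + j) : ℤ)) :=
  stmt3_general p u hp hp3 hu2 n n'' k s j hk1 hk2 hs hj hform
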